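/- arXiv:0904.2543 — 4 statements merged into one kernel-verified Lean document; each statement's English description precedes it below -/
import Mathlib

section
/- For every integer m and every integer n ≥ 2 the following straightening relation holds in K: x m · x (m+2n) = x (m+2⌊n/2⌋) · x (m+2⌈n/2⌉) + ( Σ_{j=0}^{⌊(n−2)/2⌋} (j+1) · u (n−2−2j) ) · c, where c = z if m is even and c = w if m is odd. -/
set_option maxHeartbeats 1600000

noncomputable section

abbrev Kf : Type := FractionRing (MvPolynomial (Fin 3) ℚ)

def X1 : Kf := algebraMap (MvPolynomial (Fin 3) ℚ) Kf (MvPolynomial.X 0)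
def X2 : Kf := algebraMap (MvPolynomial (Fin 3) ℚ) Kf (MvPolynomial.X 1)
def X3 : Kf := algebraMap (MvPolynomial (Fin 3) ℚ) Kf (MvPolynomial.X 2)

theorem stmt13 (x : ℤ → Kf)
    (h1 : x 1 = X1) (h2 : x 2 = X2) (h3 : x 3 = X3)
    (hne : ∀ m : ℤ, x m ≠ 0)
    (hrec : ∀ m : ℤ, x m * x (m + 3) = x (m + 1) * x (m + 2) + 1)
    (w z : Kf)
    (hw : w = (X1 + X3) / X2)
    (hz : z = (X1 * X2 + 1 + X2 * X3) / (X1 * X3))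
    (u : ℕ → Kf)
    (hu0 : u 0 = 1) (hu1 : u 1 = z * w - 2) (hu2 : u 2 = (u 1) ^ 2 - 2)
    (hurec : ∀ n : ℕ, 2 ≤ n → u (n + 1) = u 1 * u n - u (n - 1)) :
    ∀ m : ℤ, ∀ n : ℕ, 2 ≤ n →
      x m * x (m + 2 * (n : ℤ)) =
        x (m + 2 * ((n / 2 : ℕ) : ℤ)) * x (m + 2 * (((n + 1) / 2 : ℕ) : ℤ)) +
          (∑ j ∈ Finset.range ((n - 2) / 2 + 1), ((j + 1 : ℕ) : Kf) * u (n - 2 - 2 * j)) *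
            (if Even m then z else w) := by
  have hX1 : X1 ≠ 0 := by rw [← h1]; exact hne 1
  have hX2 : X2 ≠ 0 := by rw [← h2]; exact hne 2
  have hX3 : X3 ≠ 0 := by rw [← h3]; exact hne 3
  have hpar : ∀ a : ℤ, (if Even (a+2) then z else w) = (if Even a then z else w) := by
    intro a
    have h : Even (a+2) ↔ Even a :=
      ⟨fun ⟨r, hr⟩ => ⟨r - 1, by omega⟩, fun ⟨r, hr⟩ => ⟨r + 1, by omega⟩⟩
    rw [if_congr h rfl rfl]
  have hpar2 : ∀ a t : ℤ, (if Even (a + 2*t) then z else w) = (if Even a then z else w) := by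
    intro a t
    have h : Even (a+2*t) ↔ Even a :=
      ⟨fun ⟨r, hr⟩ => ⟨r - t, by omega⟩, fun ⟨r, hr⟩ => ⟨r + t, by omega⟩⟩
    rw [if_congr h rfl rfl]
  -- Step 1: the alternating linear relation
  have hkey : ∀ a : ℤ, x (a+1) * (x (a+2) + x (a+4)) = x (a+3) * (x a + x (a+2)) := by
    intro a
    have r1 := hrec a
    have r2 := hrec (a+1)
    ring_nf at r1 r2 ⊢
    linear_combination r2 - r1
  have fwd : ∀ a : ℤ, (x a + x (a+2) = (if Even a then z else w) * x (a+1)) →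
      (x (a+2) + x (a+4) = (if Even (a+2) then z else w) * x (a+3)) := by
    intro a h
    rw [hpar a]
    apply mul_left_cancel₀ (hne (a+1))
    rw [hkey a, h]; ring
  have bwd : ∀ a : ℤ, (x (a+2) + x (a+4) = (if Even (a+2) then z else w) * x (a+3)) →
      (x a + x (a+2) = (if Even a then z else w) * x (a+1)) := by
    intro a h
    rw [hpar a] at h
    apply mul_left_cancel₀ (hne (a+3))
    rw [← hkey a, h]; ring
  have hC1 : x 1 + x 3 = (if Even (1:ℤ) then z else w) * x 2 := by
    rw [if_neg (by decide), h1, h2, h3, hw, div_mul_cancel₀ _ hX2]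
  have hC2 : x 2 + x 4 = (if Even (2:ℤ) then z else w) * x 3 := by
    rw [if_pos (by decide)]
    apply mul_left_cancel₀ (hne 1)
    have r := hrec 1
    norm_num at r
    calc x 1 * (x 2 + x 4) = x 1 * x 2 + (x 2 * x 3 + 1) := by rw [← r]; ring
    _ = x 1 * (z * x 3) := by rw [h1, h2, h3, hz]; field_simp; ring
  have hC0 : x 0 + x 2 = (if Even (0:ℤ) then z else w) * x 1 := by
    rw [if_pos (by decide)]
    apply mul_left_cancel₀ (hne 3)
    have r := hrec 0
    norm_num at r
    calc x 3 * (x 0 + x 2) = (x 1 * x 2 + 1) + x 3 * x 2 := by rw [← r]; ring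
    _ = x 3 * (z * x 1) := by rw [h1, h2, h3, hz]; field_simp
  have main : ∀ a : ℤ, (x a + x (a+2) = (if Even a then z else w) * x (a+1)) ∧
      (x (a+1) + x (a+3) = (if Even (a+1) then z else w) * x (a+2)) := by
    intro a
    induction a using Int.induction_on with
    | zero =>
      constructor
      · norm_num; exact (by norm_num at hC0 ⊢; exact hC0)
      · norm_num at hC1 ⊢; exact hC1
    | succ i ih =>
      constructor
      · have := ih.2
        ring_nf at this ⊢
        exact this
      · have := fwd (i:ℤ) ih.1
        ring_nf at this ⊢
        exact this
    | pred i ih =>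
      have harg : x (-(i:ℤ)-1+2) + x (-(i:ℤ)-1+4)
          = (if Even (-(i:ℤ)-1+2) then z else w) * x (-(i:ℤ)-1+3) := by
        have := ih.2; ring_nf at this ⊢; exact this
      have hb := bwd (-(i:ℤ)-1) harg
      constructor
      · have := hb; ring_nf at this ⊢; exact this
      · have := ih.1; ring_nf at this ⊢; exact this
  have hC : ∀ a : ℤ, x a + x (a+2) = (if Even a then z else w) * x (a+1) :=
    fun a => (main a).1
  -- Step 2: the two-step relations
  have hB : ∀ a : ℤ, x a * x (a+4) = x (a+2)^2 + (if Even a then z else w) := by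
    intro a
    have e1 := hC a
    have e2 := hC (a+2)
    rw [hpar a] at e2
    have e3 := hrec (a+1)
    ring_nf at e1 e2 e3 ⊢
    linear_combination x (4+a) * e1 + (if Even a then z else w) * e3 - x (2+a) * e2
  have hE : ∀ a : ℤ, x a + x (a+4) = u 1 * x (a+2) := by
    intro a
    have e1 := hC a
    have e2 := hC (a+1)
    have e3 := hC (a+2)
    rw [hpar a] at e3
    rcases Int.even_or_odd a with h | h
    · have hodd : ¬ Even (a+1) := by simp [Int.even_add_one, h]
      rw [if_pos h] at e1 e3
      rw [if_neg hodd] at e2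
      ring_nf at e1 e2 e3 ⊢
      linear_combination e1 + e3 + z * e2 - x (2+a) * hu1
    · have h0 : ¬ Even a := by simpa [Int.not_even_iff_odd] using h
      have hev : Even (a+1) := by simpa [Int.even_add_one] using h0
      rw [if_neg h0] at e1 e3
      rw [if_pos hev] at e2
      ring_nf at e1 e2 e3 ⊢
      linear_combination e1 + e3 + w * e2 - x (2+a) * hu1
  -- Step 3: sum identities for u
  have L1 : ∀ i : ℕ, (∑ j ∈ Finset.range (i+2), ((j+1:ℕ):Kf) * u (2*i+2-2*j))
      = u 1 * (∑ j ∈ Finset.range (i+1), ((j+1:ℕ):Kf) * u (2*i+1-2*j))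
        - (∑ j ∈ Finset.range (i+1), ((j+1:ℕ):Kf) * u (2*i-2*j)) + 1 := by
    intro i
    have key : ∀ j ∈ Finset.range i, ((j+1:ℕ):Kf) * u (2*i+2-2*j)
        = u 1 * (((j+1:ℕ):Kf) * u (2*i+1-2*j)) - ((j+1:ℕ):Kf) * u (2*i-2*j) := by
      intro j hj
      have hj' : j + 1 ≤ i := Finset.mem_range.mp hj
      have h2 : 2 ≤ 2*i+1-2*j := by omega
      have h := hurec (2*i+1-2*j) h2
      rw [show 2*i+1-2*j+1 = 2*i+2-2*j from by omega,
          show 2*i+1-2*j-1 = 2*i-2*j from by omega] at h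
      rw [h]; ring
    rw [Finset.sum_range_succ, Finset.sum_range_succ,
        Finset.sum_range_succ (f := fun j => ((j+1:ℕ):Kf) * u (2*i+1-2*j)),
        Finset.sum_range_succ (f := fun j => ((j+1:ℕ):Kf) * u (2*i-2*j)),
        Finset.sum_congr rfl key, Finset.sum_sub_distrib, ← Finset.mul_sum]
    rw [show 2*i+2-2*i = 2 from by omega, show 2*i+2-2*(i+1) = 0 from by omega,
        show 2*i+1-2*i = 1 from by omega, show 2*i-2*i = 0 from by omega, hu0, hu2]
    push_cast
    ring
  have L2 : ∀ i : ℕ, (∑ j ∈ Finset.range (i+2), ((j+1:ℕ):Kf) * u (2*i+3-2*j))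
      = u 1 * (∑ j ∈ Finset.range (i+2), ((j+1:ℕ):Kf) * u (2*i+2-2*j))
        - (∑ j ∈ Finset.range (i+1), ((j+1:ℕ):Kf) * u (2*i+1-2*j)) := by
    intro i
    have key : ∀ j ∈ Finset.range (i+1), ((j+1:ℕ):Kf) * u (2*i+3-2*j)
        = u 1 * (((j+1:ℕ):Kf) * u (2*i+2-2*j)) - ((j+1:ℕ):Kf) * u (2*i+1-2*j) := by
      intro j hj
      have hj' : j + 1 ≤ i + 1 := Finset.mem_range.mp hj
      have h2 : 2 ≤ 2*i+2-2*j := by omega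
      have h := hurec (2*i+2-2*j) h2
      rw [show 2*i+2-2*j+1 = 2*i+3-2*j from by omega,
          show 2*i+2-2*j-1 = 2*i+1-2*j from by omega] at h
      rw [h]; ring
    rw [Finset.sum_range_succ,
        Finset.sum_range_succ (f := fun j => ((j+1:ℕ):Kf) * u (2*i+2-2*j)),
        Finset.sum_congr rfl key, Finset.sum_sub_distrib, ← Finset.mul_sum]
    rw [show 2*i+3-2*(i+1) = 1 from by omega, show 2*i+2-2*(i+1) = 0 from by omega, hu0]
    push_cast
    ring
  -- Step 4: main induction
  have G : ∀ n : ℕ, 2 ≤ n → ∀ a : ℤ,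
      x a * x (a + 2 * (n : ℤ)) =
        x (a + 2 * ((n / 2 : ℕ) : ℤ)) * x (a + 2 * (((n + 1) / 2 : ℕ) : ℤ)) +
          (∑ j ∈ Finset.range ((n - 2) / 2 + 1), ((j + 1 : ℕ) : Kf) * u (n - 2 - 2 * j)) *
            (if Even a then z else w) := by
    intro n
    induction n using Nat.strong_induction_on with
    | _ n IH =>
      match n with
      | 0 => intro h; exact absurd h (by norm_num)
      | 1 => intro h; exact absurd h (by norm_num)
      | 2 =>
        intro _ a
        set T := (if Even a then z else w) with hT
        norm_num [Finset.sum_range_one, hu0]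
        have h := hB a
        ring_nf at h ⊢
        linear_combination h
      | 3 =>
        intro _ a
        set T := (if Even a then z else w) with hT
        norm_num [Finset.sum_range_one]
        have hE2 := hE (a+2)
        have hBa := hB a
        have hEa := hE a
        ring_nf at hE2 hBa hEa ⊢
        linear_combination x a * hE2 + u 1 * hBa - x (2+a) * hEa
      | (k+4) =>
        intro _ a
        set T := (if Even a then z else w) with hT
        obtain ⟨i, rfl | rfl⟩ := Nat.even_or_odd' k
        · -- n = 2i+4
          have P1 := IH (2*i+3) (by omega) (by omega) a
          have P2 := IH (2*i+2) (by omega) (by omega) a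
          have s1 : (∑ j ∈ Finset.range (i+1), ((j+1:ℕ):Kf) * u (2*i+3-2-2*j))
              = ∑ j ∈ Finset.range (i+1), ((j+1:ℕ):Kf) * u (2*i+1-2*j) :=
            Finset.sum_congr rfl (fun j hj => by
              rw [show 2*i+3-2-2*j = 2*i+1-2*j from by omega])
          have s2 : (∑ j ∈ Finset.range (i+1), ((j+1:ℕ):Kf) * u (2*i+2-2-2*j))
              = ∑ j ∈ Finset.range (i+1), ((j+1:ℕ):Kf) * u (2*i-2*j) :=
            Finset.sum_congr rfl (fun j hj => by
              rw [show 2*i+2-2-2*j = 2*i-2*j from by omega])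
          have s3 : (∑ j ∈ Finset.range (i+2), ((j+1:ℕ):Kf) * u (2*i+4-2-2*j))
              = ∑ j ∈ Finset.range (i+2), ((j+1:ℕ):Kf) * u (2*i+2-2*j) :=
            Finset.sum_congr rfl (fun j hj => by
              rw [show 2*i+4-2-2*j = 2*i+2-2*j from by omega])
          rw [show (2*i+3)/2 = i+1 from by omega, show (2*i+3+1)/2 = i+2 from by omega,
              show (2*i+3-2)/2+1 = i+1 from by omega, s1] at P1
          rw [show (2*i+2)/2 = i+1 from by omega, show (2*i+2+1)/2 = i+1 from by omega,
              show (2*i+2-2)/2+1 = i+1 from by omega, s2] at P2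
          rw [show (2*i+4)/2 = i+2 from by omega, show (2*i+4+1)/2 = i+2 from by omega,
              show (2*i+4-2)/2+1 = i+2 from by omega, s3]
          have hE4 := hE (a + 4*(i:ℤ) + 4)
          have hE' := hE (a + 2*((i:ℤ)+1))
          have hB' := hB (a + 2*((i:ℤ)+1))
          rw [hpar2 a ((i:ℤ)+1), ← hT] at hB'
          have L1i := L1 i
          push_cast at P1 P2 hE4 hE' hB' L1i ⊢
          ring_nf at P1 P2 hE4 hE' hB' L1i ⊢
          linear_combination x a * hE4 + u 1 * P1 - P2 - x (2 + a + (i:ℤ)*2) * hE' + hB'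
            - T * L1i
        · -- n = 2i+5
          have P1 := IH (2*i+4) (by omega) (by omega) a
          have P2 := IH (2*i+3) (by omega) (by omega) a
          have s1 : (∑ j ∈ Finset.range (i+2), ((j+1:ℕ):Kf) * u (2*i+4-2-2*j))
              = ∑ j ∈ Finset.range (i+2), ((j+1:ℕ):Kf) * u (2*i+2-2*j) :=
            Finset.sum_congr rfl (fun j hj => by
              rw [show 2*i+4-2-2*j = 2*i+2-2*j from by omega])
          have s2 : (∑ j ∈ Finset.range (i+1), ((j+1:ℕ):Kf) * u (2*i+3-2-2*j))
              = ∑ j ∈ Finset.range (i+1), ((j+1:ℕ):Kf) * u (2*i+1-2*j) :=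
            Finset.sum_congr rfl (fun j hj => by
              rw [show 2*i+3-2-2*j = 2*i+1-2*j from by omega])
          have s3 : (∑ j ∈ Finset.range (i+2), ((j+1:ℕ):Kf) * u (2*i+1+4-2-2*j))
              = ∑ j ∈ Finset.range (i+2), ((j+1:ℕ):Kf) * u (2*i+3-2*j) :=
            Finset.sum_congr rfl (fun j hj => by
              rw [show 2*i+1+4-2-2*j = 2*i+3-2*j from by omega])
          rw [show (2*i+4)/2 = i+2 from by omega, show (2*i+4+1)/2 = i+2 from by omega,
              show (2*i+4-2)/2+1 = i+2 from by omega, s1] at P1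
          rw [show (2*i+3)/2 = i+1 from by omega, show (2*i+3+1)/2 = i+2 from by omega,
              show (2*i+3-2)/2+1 = i+1 from by omega, s2] at P2
          rw [show (2*i+1+4)/2 = i+2 from by omega, show (2*i+1+4+1)/2 = i+3 from by omega,
              show (2*i+1+4-2)/2+1 = i+2 from by omega, s3]
          have hE4 := hE (a + 4*(i:ℤ) + 6)
          have hE'' := hE (a + 2*((i:ℤ)+1))
          have L2i := L2 i
          push_cast at P1 P2 hE4 hE'' L2i ⊢
          ring_nf at P1 P2 hE4 hE'' L2i ⊢
          linear_combination x a * hE4 + u 1 * P1 - P2 - x (4 + a + (i:ℤ)*2) * hE''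
            - T * L2i
  intro m n hn
  exact G n hn m

end
end

section
/- For every integer m, the triple (D m, D (m+1), D (m+2)) is a ℤ-basis of ℤ³ (equivalently, the 3×3 integer matrix with these columns has determinant ±1); moreover, for every integer m the triples (D (2m+1), (0,1,0), D (2m+3)) and (D (2m), (1,0,1), D (2m+2)) are ℤ-bases of ℤ³. (Here (0,1,0) and (1,0,1) are the denominator vectors of w and z, so this states that for every cluster of the cluster algebra of type A₂⁽¹⁾ the denominator vectors of its three cluster variables form a ℤ-basis of the root lattice ℤ³.) -/
/-- The denominator vectors of the cluster variables of the cluster algebra of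
type `A₂⁽¹⁾` in the initial cluster form a `ℤ`-basis of the root lattice `ℤ³`,
for every cluster. -/
theorem stmt17 (D : ℤ → Fin 3 → ℤ)
    (hD1 : D 1 = ![-1, 0, 0]) (hD2 : D 2 = ![0, -1, 0]) (hD3 : D 3 = ![0, 0, -1])
    (hodd : ∀ m : ℤ, 2 ≤ m → D (2 * m + 1) = ![m - 1, m - 1, m - 2])
    (heven : ∀ m : ℤ, 1 ≤ m → D (2 * m + 2) = ![m, m - 1, m - 1])
    (hnegodd : ∀ m : ℤ, 1 ≤ m → D (-2 * m + 1) = ![m - 1, m, m])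
    (hnegeven : ∀ m : ℤ, 1 ≤ m → D (-2 * m + 2) = ![m - 1, m - 1, m]) :
    (∀ m : ℤ,
      (Matrix.of ![D m, D (m + 1), D (m + 2)]).det = 1 ∨
      (Matrix.of ![D m, D (m + 1), D (m + 2)]).det = -1) ∧
    (∀ m : ℤ,
      (Matrix.of ![D (2 * m + 1), ![0, 1, 0], D (2 * m + 3)]).det = 1 ∨
      (Matrix.of ![D (2 * m + 1), ![0, 1, 0], D (2 * m + 3)]).det = -1) ∧
    (∀ m : ℤ,
      (Matrix.of ![D (2 * m), ![1, 0, 1], D (2 * m + 2)]).det = 1 ∨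
      (Matrix.of ![D (2 * m), ![1, 0, 1], D (2 * m + 2)]).det = -1) := by
  -- closed forms on the four unbounded regions
  have hA : ∀ n k : ℤ, n = 2 * k → k ≤ 0 → D n = ![1 - k - 1, 1 - k - 1, 1 - k] := by
    rintro n k rfl hk
    have h := hnegeven (1 - k) (by omega)
    rwa [show (-2 * (1 - k) + 2 : ℤ) = 2 * k by ring] at h
  have hB : ∀ n k : ℤ, n = 2 * k + 1 → k ≤ -1 → D n = ![-k - 1, -k, -k] := by
    rintro n k rfl hk
    have h := hnegodd (-k) (by omega)
    rwa [show (-2 * -k + 1 : ℤ) = 2 * k + 1 by ring] at h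
  have hC : ∀ n k : ℤ, n = 2 * k → 2 ≤ k → D n = ![k - 1, k - 1 - 1, k - 1 - 1] := by
    rintro n k rfl hk
    have h := heven (k - 1) (by omega)
    rwa [show (2 * (k - 1) + 2 : ℤ) = 2 * k by ring] at h
  have hE : ∀ n k : ℤ, n = 2 * k + 1 → 2 ≤ k → D n = ![k - 1, k - 1, k - 2] := by
    rintro n k rfl hk
    exact hodd k hk
  -- small concrete values
  have h0 : D 0 = ![0, 0, 1] := by
    have h := hnegeven 1 le_rfl; norm_num at h; exact h
  have hm1 : D (-1) = ![0, 1, 1] := by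
    have h := hnegodd 1 le_rfl; norm_num at h; exact h
  have h4 : D 4 = ![1, 0, 0] := by
    have h := heven 1 le_rfl; norm_num at h; exact h
  have h5 : D 5 = ![1, 1, 0] := by
    have h := hodd 2 le_rfl; norm_num at h; exact h
  refine ⟨fun m => ?_, fun m => ?_, fun m => ?_⟩
  · obtain ⟨k, hk | hk⟩ := Int.even_or_odd' m <;> subst hk
    · -- m = 2k
      rcases (by omega : k ≤ -1 ∨ k = 0 ∨ k = 1 ∨ 2 ≤ k) with h | rfl | rfl | h
      · rw [hA (2 * k) k rfl (by omega), hB (2 * k + 1) k rfl (by omega),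
          hA (2 * k + 2) (k + 1) (by ring) (by omega)]
        left; simp [Matrix.det_fin_three, Matrix.cons_val_two, Matrix.tail_cons, Matrix.vecHead, Matrix.vecTail, Matrix.cons_val_two, Matrix.tail_cons, Matrix.vecHead, Matrix.vecTail]; ring
      · left; norm_num [Matrix.det_fin_three, Matrix.cons_val_two, Matrix.tail_cons, Matrix.vecHead, Matrix.vecTail, h0, hD1, hD2]
      · left; norm_num [Matrix.det_fin_three, Matrix.cons_val_two, Matrix.tail_cons, Matrix.vecHead, Matrix.vecTail, hD2, hD3, h4]
      · rw [hC (2 * k) k rfl (by omega), hE (2 * k + 1) k rfl (by omega),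
          hC (2 * k + 2) (k + 1) (by ring) (by omega)]
        left; simp [Matrix.det_fin_three, Matrix.cons_val_two, Matrix.tail_cons, Matrix.vecHead, Matrix.vecTail, Matrix.cons_val_two, Matrix.tail_cons, Matrix.vecHead, Matrix.vecTail]; ring
    · -- m = 2k+1
      rcases (by omega : k ≤ -2 ∨ k = -1 ∨ k = 0 ∨ k = 1 ∨ 2 ≤ k) with h | rfl | rfl | rfl | h
      · rw [hB (2 * k + 1) k rfl (by omega), hA (2 * k + 1 + 1) (k + 1) (by ring) (by omega),
          hB (2 * k + 1 + 2) (k + 1) (by ring) (by omega)]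
        right; simp [Matrix.det_fin_three, Matrix.cons_val_two, Matrix.tail_cons, Matrix.vecHead, Matrix.vecTail, Matrix.cons_val_two, Matrix.tail_cons, Matrix.vecHead, Matrix.vecTail]; ring
      · right; norm_num [Matrix.det_fin_three, Matrix.cons_val_two, Matrix.tail_cons, Matrix.vecHead, Matrix.vecTail, hm1, h0, hD1]
      · right; norm_num [Matrix.det_fin_three, Matrix.cons_val_two, Matrix.tail_cons, Matrix.vecHead, Matrix.vecTail, hD1, hD2, hD3]
      · right; norm_num [Matrix.det_fin_three, Matrix.cons_val_two, Matrix.tail_cons, Matrix.vecHead, Matrix.vecTail, hD3, h4, h5]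
      · rw [hE (2 * k + 1) k rfl (by omega), hC (2 * k + 1 + 1) (k + 1) (by ring) (by omega),
          hE (2 * k + 1 + 2) (k + 1) (by ring) (by omega)]
        right; simp [Matrix.det_fin_three, Matrix.cons_val_two, Matrix.tail_cons, Matrix.vecHead, Matrix.vecTail, Matrix.cons_val_two, Matrix.tail_cons, Matrix.vecHead, Matrix.vecTail]; ring
  · rcases (by omega : m ≤ -2 ∨ m = -1 ∨ m = 0 ∨ m = 1 ∨ 2 ≤ m) with h | rfl | rfl | rfl | h
    · rw [hB (2 * m + 1) m rfl (by omega), hB (2 * m + 3) (m + 1) (by ring) (by omega)]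
      left; simp [Matrix.det_fin_three, Matrix.cons_val_two, Matrix.tail_cons, Matrix.vecHead, Matrix.vecTail, Matrix.cons_val_two, Matrix.tail_cons, Matrix.vecHead, Matrix.vecTail]; ring
    · left; norm_num [Matrix.det_fin_three, Matrix.cons_val_two, Matrix.tail_cons, Matrix.vecHead, Matrix.vecTail, hm1, hD1]
    · left; norm_num [Matrix.det_fin_three, Matrix.cons_val_two, Matrix.tail_cons, Matrix.vecHead, Matrix.vecTail, hD1, hD3]
    · left; norm_num [Matrix.det_fin_three, Matrix.cons_val_two, Matrix.tail_cons, Matrix.vecHead, Matrix.vecTail, hD3, h5]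
    · rw [hE (2 * m + 1) m rfl (by omega), hE (2 * m + 3) (m + 1) (by ring) (by omega)]
      left; simp [Matrix.det_fin_three, Matrix.cons_val_two, Matrix.tail_cons, Matrix.vecHead, Matrix.vecTail, Matrix.cons_val_two, Matrix.tail_cons, Matrix.vecHead, Matrix.vecTail]; ring
  · rcases (by omega : m ≤ -1 ∨ m = 0 ∨ m = 1 ∨ 2 ≤ m) with h | rfl | rfl | h
    · rw [hA (2 * m) m rfl (by omega), hA (2 * m + 2) (m + 1) (by ring) (by omega)]
      right; simp [Matrix.det_fin_three, Matrix.cons_val_two, Matrix.tail_cons, Matrix.vecHead, Matrix.vecTail, Matrix.cons_val_two, Matrix.tail_cons, Matrix.vecHead, Matrix.vecTail]; ring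
    · right; norm_num [Matrix.det_fin_three, Matrix.cons_val_two, Matrix.tail_cons, Matrix.vecHead, Matrix.vecTail, h0, hD2]
    · right; norm_num [Matrix.det_fin_three, Matrix.cons_val_two, Matrix.tail_cons, Matrix.vecHead, Matrix.vecTail, hD2, h4]
    · rw [hC (2 * m) m rfl (by omega), hC (2 * m + 2) (m + 1) (by ring) (by omega)]
      right; simp [Matrix.det_fin_three, Matrix.cons_val_two, Matrix.tail_cons, Matrix.vecHead, Matrix.vecTail, Matrix.cons_val_two, Matrix.tail_cons, Matrix.vecHead, Matrix.vecTail]; ring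
end

section
/- Let v = (l, m, n) ∈ ℤ³ with l ≥ m ≥ n ≥ 0. Then v belongs to the additive monoid ℤ≥0·(1,0,0) + ℤ≥0·(1,1,0) + ℤ≥0·(2,1,1) + ℤ≥0·(2,2,1) if and only if l ≥ 2n. Moreover, if l ≥ 2n and n ≤ l − m then v = (l−m−n)·(1,0,0) + (m−n)·(1,1,0) + n·(2,1,1), while if l ≥ 2n and n ≥ l − m then v = (l−2n)·(1,1,0) + (l−m)·(2,1,1) + (n−l+m)·(2,2,1). -/
/-- The set of vectors `(a,b,c)` with `2c ≤ a` is an additive submonoid of `ℤ³`. -/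
def coneSubmonoid : AddSubmonoid (ℤ × ℤ × ℤ) where
  carrier := {v | 2 * v.2.2 ≤ v.1}
  zero_mem' := by simp
  add_mem' := by
    intro a b ha hb
    simp only [Set.mem_setOf_eq, Prod.fst_add, Prod.snd_add] at *
    linarith

lemma smul_toNat_mem {S : AddSubmonoid (ℤ × ℤ × ℤ)} {x : ℤ × ℤ × ℤ} (hx : x ∈ S)
    (k : ℤ) (hk : 0 ≤ k) : k • x ∈ S := by
  lift k to ℕ using hk
  simpa using S.nsmul_mem hx k

/-- Membership criterion and explicit decomposition for elements of the cone
`{l ≥ m ≥ n ≥ 0}` of the root lattice `ℤ³` with respect to the cone generated by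
the denominator vectors `d(x₄) = (1,0,0)`, `d(x₅) = (1,1,0)`, `d(x₆) = (2,1,1)`,
`d(x₇) = (2,2,1)` of the cluster algebra of type `A₂⁽¹⁾`. -/
theorem stmt18 (l m n : ℤ) (hlm : m ≤ l) (hmn : n ≤ m) (hn : 0 ≤ n) :
    (((l, m, n) ∈ AddSubmonoid.closure
        ({((1 : ℤ), (0 : ℤ), (0 : ℤ)), (1, 1, 0), (2, 1, 1), (2, 2, 1)} :
          Set (ℤ × ℤ × ℤ))) ↔ 2 * n ≤ l) ∧
    (2 * n ≤ l → n ≤ l - m →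
      (l, m, n) = (l - m - n) • ((1 : ℤ), (0 : ℤ), (0 : ℤ)) +
        (m - n) • ((1 : ℤ), (1 : ℤ), (0 : ℤ)) + n • ((2 : ℤ), (1 : ℤ), (1 : ℤ))) ∧
    (2 * n ≤ l → l - m ≤ n →
      (l, m, n) = (l - 2 * n) • ((1 : ℤ), (1 : ℤ), (0 : ℤ)) +
        (l - m) • ((2 : ℤ), (1 : ℤ), (1 : ℤ)) +
        (n - l + m) • ((2 : ℤ), (2 : ℤ), (1 : ℤ))) := by
  have h1 : ((1 : ℤ), (0 : ℤ), (0 : ℤ)) ∈ AddSubmonoid.closure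
      ({((1 : ℤ), (0 : ℤ), (0 : ℤ)), (1, 1, 0), (2, 1, 1), (2, 2, 1)} :
        Set (ℤ × ℤ × ℤ)) := AddSubmonoid.subset_closure (by simp)
  have h2 : ((1 : ℤ), (1 : ℤ), (0 : ℤ)) ∈ AddSubmonoid.closure
      ({((1 : ℤ), (0 : ℤ), (0 : ℤ)), (1, 1, 0), (2, 1, 1), (2, 2, 1)} :
        Set (ℤ × ℤ × ℤ)) := AddSubmonoid.subset_closure (by simp)
  have h3 : ((2 : ℤ), (1 : ℤ), (1 : ℤ)) ∈ AddSubmonoid.closure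
      ({((1 : ℤ), (0 : ℤ), (0 : ℤ)), (1, 1, 0), (2, 1, 1), (2, 2, 1)} :
        Set (ℤ × ℤ × ℤ)) := AddSubmonoid.subset_closure (by simp)
  have h4 : ((2 : ℤ), (2 : ℤ), (1 : ℤ)) ∈ AddSubmonoid.closure
      ({((1 : ℤ), (0 : ℤ), (0 : ℤ)), (1, 1, 0), (2, 1, 1), (2, 2, 1)} :
        Set (ℤ × ℤ × ℤ)) := AddSubmonoid.subset_closure (by simp)
  refine ⟨⟨fun h => ?_, fun h => ?_⟩, fun _ h => ?_, fun h h' => ?_⟩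
  · have hsub : AddSubmonoid.closure
        ({((1 : ℤ), (0 : ℤ), (0 : ℤ)), (1, 1, 0), (2, 1, 1), (2, 2, 1)} :
          Set (ℤ × ℤ × ℤ)) ≤ coneSubmonoid := by
      rw [AddSubmonoid.closure_le]
      intro x hx
      simp only [Set.mem_insert_iff, Set.mem_singleton_iff] at hx
      rcases hx with rfl | rfl | rfl | rfl <;> simp [coneSubmonoid]
    exact hsub h
  · rcases le_total n (l - m) with hc | hc
    · have : (l, m, n) = (l - m - n) • ((1 : ℤ), (0 : ℤ), (0 : ℤ)) +
          (m - n) • ((1 : ℤ), (1 : ℤ), (0 : ℤ)) + n • ((2 : ℤ), (1 : ℤ), (1 : ℤ)) := by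
        simp only [Prod.smul_mk, Prod.mk_add_mk, smul_eq_mul, Prod.mk.injEq]; omega
      rw [this]
      exact AddSubmonoid.add_mem _ (AddSubmonoid.add_mem _
        (smul_toNat_mem h1 _ (by omega)) (smul_toNat_mem h2 _ (by omega)))
        (smul_toNat_mem h3 _ hn)
    · have : (l, m, n) = (l - 2 * n) • ((1 : ℤ), (1 : ℤ), (0 : ℤ)) +
          (l - m) • ((2 : ℤ), (1 : ℤ), (1 : ℤ)) +
          (n - l + m) • ((2 : ℤ), (2 : ℤ), (1 : ℤ)) := by
        simp only [Prod.smul_mk, Prod.mk_add_mk, smul_eq_mul, Prod.mk.injEq]; omega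
      rw [this]
      exact AddSubmonoid.add_mem _ (AddSubmonoid.add_mem _
        (smul_toNat_mem h2 _ (by omega)) (smul_toNat_mem h3 _ (by omega)))
        (smul_toNat_mem h4 _ (by omega))
  · simp only [Prod.smul_mk, Prod.mk_add_mk, smul_eq_mul, Prod.mk.injEq]; omega
  · simp only [Prod.smul_mk, Prod.mk_add_mk, smul_eq_mul, Prod.mk.injEq]; omega
end

section
/- Let v : ℤ → ℤ³ be a sequence satisfying v 0 = (0,0,−1), v 1 = (1,0,0), v 2 = (1,1,0), and for every m ∈ ℤ the componentwise identity v m + v (m+3) = v (m+1) + v (m+2) − min(v (m+1), 0) − min(v (m+2), 0), where min(·,0) is taken in each of the three coordinates. Then v m = D (m+3) for every m ∈ ℤ. (This solves the Y-system recurrence y_{1;m} · y_{1;m+3} = y_{1;m+1} y_{1;m+2} / ((y_{1;m+1} ⊕ 1)(y_{1;m+2} ⊕ 1)) of type A₂⁽¹⁾ in the tropical semifield Trop(y₁,y₂,y₃), where y_{1;m} = y₁^{(v m)₁} y₂^{(v m)₂} y₃^{(v m)₃}: it states y_{1;m} = y^{d(x_{m+3})}.) -/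
def Wa (m : ℤ) : ℤ :=
  if m = -1 then 0
  else if m % 2 = 0 then (if 0 ≤ m then m / 2 else (-m - 4) / 2)
  else (if 0 ≤ m then (m + 1) / 2 else (-m - 3) / 2)

def Wb (m : ℤ) : ℤ :=
  if m = -1 then -1
  else if m % 2 = 0 then (if 0 ≤ m then m / 2 else (-m - 2) / 2)
  else (if 0 ≤ m then (m - 1) / 2 else (-m - 3) / 2)

def Wc (m : ℤ) : ℤ :=
  if m = -1 then 0
  else if m % 2 = 0 then (if 0 ≤ m then m / 2 - 1 else (-m - 2) / 2)
  else (if 0 ≤ m then (m - 1) / 2 else (-m - 1) / 2)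

def Wsol (m : ℤ) : Fin 3 → ℤ := ![Wa m, Wb m, Wc m]

lemma Wa_spec (n : ℤ) :
    (n = -1 ∧ Wa n = 0) ∨
    (n ≠ -1 ∧ n % 2 = 0 ∧ 0 ≤ n ∧ 2 * Wa n = n) ∨
    (n ≠ -1 ∧ n % 2 = 0 ∧ n < 0 ∧ 2 * Wa n = -n - 4) ∨
    (n ≠ -1 ∧ n % 2 ≠ 0 ∧ 0 ≤ n ∧ 2 * Wa n = n + 1) ∨
    (n ≠ -1 ∧ n % 2 ≠ 0 ∧ n < 0 ∧ 2 * Wa n = -n - 3) := by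
  simp only [Wa]; split_ifs <;> omega

lemma Wb_spec (n : ℤ) :
    (n = -1 ∧ Wb n = -1) ∨
    (n ≠ -1 ∧ n % 2 = 0 ∧ 0 ≤ n ∧ 2 * Wb n = n) ∨
    (n ≠ -1 ∧ n % 2 = 0 ∧ n < 0 ∧ 2 * Wb n = -n - 2) ∨
    (n ≠ -1 ∧ n % 2 ≠ 0 ∧ 0 ≤ n ∧ 2 * Wb n = n - 1) ∨
    (n ≠ -1 ∧ n % 2 ≠ 0 ∧ n < 0 ∧ 2 * Wb n = -n - 3) := by
  simp only [Wb]; split_ifs <;> omega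

lemma Wc_spec (n : ℤ) :
    (n = -1 ∧ Wc n = 0) ∨
    (n ≠ -1 ∧ n % 2 = 0 ∧ 0 ≤ n ∧ 2 * Wc n = n - 2) ∨
    (n ≠ -1 ∧ n % 2 = 0 ∧ n < 0 ∧ 2 * Wc n = -n - 2) ∨
    (n ≠ -1 ∧ n % 2 ≠ 0 ∧ 0 ≤ n ∧ 2 * Wc n = n - 1) ∨
    (n ≠ -1 ∧ n % 2 ≠ 0 ∧ n < 0 ∧ 2 * Wc n = -n - 1) := by
  simp only [Wc]; split_ifs <;> omega

lemma Wa_rec (n : ℤ) : Wa n + Wa (n + 3) =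
    Wa (n + 1) + Wa (n + 2) - min (Wa (n + 1)) 0 - min (Wa (n + 2)) 0 := by
  have h0 := Wa_spec n; have h1 := Wa_spec (n + 1)
  have h2 := Wa_spec (n + 2); have h3 := Wa_spec (n + 3)
  omega

lemma Wb_rec (n : ℤ) : Wb n + Wb (n + 3) =
    Wb (n + 1) + Wb (n + 2) - min (Wb (n + 1)) 0 - min (Wb (n + 2)) 0 := by
  have h0 := Wb_spec n; have h1 := Wb_spec (n + 1)
  have h2 := Wb_spec (n + 2); have h3 := Wb_spec (n + 3)
  omega

lemma Wc_rec (n : ℤ) : Wc n + Wc (n + 3) =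
    Wc (n + 1) + Wc (n + 2) - min (Wc (n + 1)) 0 - min (Wc (n + 2)) 0 := by
  have h0 := Wc_spec n; have h1 := Wc_spec (n + 1)
  have h2 := Wc_spec (n + 2); have h3 := Wc_spec (n + 3)
  omega

lemma Wsol_rec (n : ℤ) (i : Fin 3) :
    Wsol n i + Wsol (n + 3) i =
      Wsol (n + 1) i + Wsol (n + 2) i - min (Wsol (n + 1) i) 0 - min (Wsol (n + 2) i) 0 := by
  fin_cases i <;>
    simp only [Wsol, Matrix.cons_val_zero, Matrix.cons_val_one, Matrix.head_cons,
      Matrix.cons_val_two, Matrix.tail_cons, Fin.mk_zero, Fin.mk_one]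
  · exact Wa_rec n
  · exact Wb_rec n
  · exact Wc_rec n

/-- Solution of the tropical Y-system of type `A₂⁽¹⁾`: the tropical coefficient
`y_{1;m}` corresponds to the denominator vector `d(x_{m+3})`. -/
theorem stmt19 (D : ℤ → Fin 3 → ℤ)
    (hD1 : D 1 = ![-1, 0, 0]) (hD2 : D 2 = ![0, -1, 0]) (hD3 : D 3 = ![0, 0, -1])
    (hodd : ∀ m : ℤ, 2 ≤ m → D (2 * m + 1) = ![m - 1, m - 1, m - 2])
    (heven : ∀ m : ℤ, 1 ≤ m → D (2 * m + 2) = ![m, m - 1, m - 1])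
    (hnegodd : ∀ m : ℤ, 1 ≤ m → D (-2 * m + 1) = ![m - 1, m, m])
    (hnegeven : ∀ m : ℤ, 1 ≤ m → D (-2 * m + 2) = ![m - 1, m - 1, m])
    (v : ℤ → Fin 3 → ℤ)
    (hv0 : v 0 = ![0, 0, -1]) (hv1 : v 1 = ![1, 0, 0]) (hv2 : v 2 = ![1, 1, 0])
    (hvrec : ∀ m : ℤ, ∀ i : Fin 3,
      v m i + v (m + 3) i =
        v (m + 1) i + v (m + 2) i - min (v (m + 1) i) 0 - min (v (m + 2) i) 0) :
    ∀ m : ℤ, v m = D (m + 3) := by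
  have hW0 : Wsol 0 = ![0, 0, -1] := by
    funext i; fin_cases i <;> simp [Wsol, Wa, Wb, Wc]
  have hW1 : Wsol 1 = ![1, 0, 0] := by
    funext i; fin_cases i <;> simp [Wsol, Wa, Wb, Wc]
  have hW2 : Wsol 2 = ![1, 1, 0] := by
    funext i; fin_cases i <;> simp [Wsol, Wa, Wb, Wc]
  have fwd : ∀ n : ℤ, v n = Wsol n → v (n + 1) = Wsol (n + 1) → v (n + 2) = Wsol (n + 2) →
      v (n + 3) = Wsol (n + 3) := by
    intro n h0 h1 h2; funext i
    have r1 := hvrec n i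
    have r2 := Wsol_rec n i
    have e0 := congrFun h0 i; have e1 := congrFun h1 i; have e2 := congrFun h2 i
    omega
  have bwd : ∀ n : ℤ, v (n + 1) = Wsol (n + 1) → v (n + 2) = Wsol (n + 2) →
      v (n + 3) = Wsol (n + 3) → v n = Wsol n := by
    intro n h1 h2 h3; funext i
    have r1 := hvrec n i
    have r2 := Wsol_rec n i
    have e1 := congrFun h1 i; have e2 := congrFun h2 i; have e3 := congrFun h3 i
    omega
  have key : ∀ n : ℤ, v n = Wsol n ∧ v (n + 1) = Wsol (n + 1) ∧ v (n + 2) = Wsol (n + 2) := by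
    intro n
    induction n using Int.induction_on with
    | zero => exact ⟨hv0.trans hW0.symm, hv1.trans hW1.symm, hv2.trans hW2.symm⟩
    | succ k ih =>
      obtain ⟨a, b, c⟩ := ih
      refine ⟨b, ?_, ?_⟩
      · rw [show (k : ℤ) + 1 + 1 = k + 2 by ring]; exact c
      · rw [show (k : ℤ) + 1 + 2 = k + 3 by ring]; exact fwd k a b c
    | pred k ih =>
      obtain ⟨a, b, c⟩ := ih
      refine ⟨?_, ?_, ?_⟩
      · have h1 : v (-(k : ℤ) - 1 + 1) = Wsol (-(k : ℤ) - 1 + 1) := by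
          rw [show -(k : ℤ) - 1 + 1 = -k by ring]; exact a
        have h2 : v (-(k : ℤ) - 1 + 2) = Wsol (-(k : ℤ) - 1 + 2) := by
          rw [show -(k : ℤ) - 1 + 2 = -k + 1 by ring]; exact b
        have h3 : v (-(k : ℤ) - 1 + 3) = Wsol (-(k : ℤ) - 1 + 3) := by
          rw [show -(k : ℤ) - 1 + 3 = -k + 2 by ring]; exact c
        exact bwd _ h1 h2 h3
      · rw [show -(k : ℤ) - 1 + 1 = -k by ring]; exact a
      · rw [show -(k : ℤ) - 1 + 2 = -k + 1 by ring]; exact b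
  have hWD : ∀ n : ℤ, Wsol n = D (n + 3) := by
    intro n
    rcases lt_trichotomy n 0 with hneg | h0 | hpos
    · rcases eq_or_ne n (-1) with rfl | hn1
      · rw [show (-1 : ℤ) + 3 = 2 by ring, hD2]
        funext i; fin_cases i <;> simp [Wsol, Wa, Wb, Wc]
      · rcases eq_or_ne n (-2) with rfl | hn2
        · rw [show (-2 : ℤ) + 3 = 1 by ring, hD1]
          funext i; fin_cases i <;> simp [Wsol, Wa, Wb, Wc]
        · rcases Int.even_or_odd n with ⟨k, hk⟩ | ⟨k, hk⟩
          · have hm : (1 : ℤ) ≤ -k - 1 := by omega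
            rw [show n + 3 = -2 * (-k - 1) + 1 by omega, hnegodd _ hm]
            funext i
            fin_cases i <;>
              · simp only [Wsol, Wa, Wb, Wc]
                simp
                split_ifs <;> omega
          · have hm : (1 : ℤ) ≤ -k - 1 := by omega
            rw [show n + 3 = -2 * (-k - 1) + 2 by omega, hnegeven _ hm]
            funext i
            fin_cases i <;>
              · simp only [Wsol, Wa, Wb, Wc]
                simp
                split_ifs <;> omega
    · subst h0
      rw [show (0 : ℤ) + 3 = 3 by ring, hD3, hW0]
    · rcases Int.even_or_odd n with ⟨k, hk⟩ | ⟨k, hk⟩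
      · have hm : (2 : ℤ) ≤ k + 1 := by omega
        rw [show n + 3 = 2 * (k + 1) + 1 by omega, hodd _ hm]
        funext i
        fin_cases i <;>
          · simp only [Wsol, Wa, Wb, Wc]
            simp
            split_ifs <;> omega
      · have hm : (1 : ℤ) ≤ k + 1 := by omega
        rw [show n + 3 = 2 * (k + 1) + 2 by omega, heven _ hm]
        funext i
        fin_cases i <;>
          · simp only [Wsol, Wa, Wb, Wc]
            simp
            split_ifs <;> omega
  intro m
  rw [(key m).1, hWD m]
end
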